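/- arXiv:1602.03647 — 2 statements merged into one kernel-verified Lean document; each statement's English description precedes it below -/
import Mathlib

section
/- Let m ≥ 2, let A and B be disjoint sets of m vertices each in {1,…,p} (p ≥ 2m), and let G be the building-block graph whose edges are: all pairs within A, all pairs within B, and a fixed perfect matching of m edges between A and B, with no other edges. Then under the Ising distribution P_G, the probability that all vertices of A take a common value and all vertices of B take a common value satisfies P_G[X is constant on A and constant on B] ≥ 1 − 2m² / (m + e^{λ(m−1)/2}). -/
/-!
Write the Ising energy as its maximal value minus the frustration, the number of edges (counted
in both orientations) on which a configuration disagrees. A configuration `x` is determined by its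
patterns `u = x ∘ a`, `v = x ∘ b` on the two cliques together with the configuration obtained from
`x` by setting both cliques to `+1`, which has zero frustration because every edge lies inside
`A ∪ B`. Hence the probability that `x` is not constant on the cliques is at most the sum of
`exp (-λ (F u + F v))` over non-constant pattern pairs, where `F u = 2 c (m - c)` for a pattern with
`c` plus signs. As `2 c (m - c) ≥ (m - 1) min c (m - c)`, this sum is at most
`4 ((1 + q) ^ (2m) - 1) ≤ 16 m q` with `q = exp (-λ (m - 1))`, which is below
`2 m² / (m + e^{λ(m-1)/2})` whenever that bound is not trivial, i.e. below `1`.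
-/

open Real Finset
open scoped Classical

noncomputable section

/-- Value of a spin: `true ↦ +1`, `false ↦ -1`. -/
def confVal (b : Bool) : ℝ := if b then 1 else -1

/-- The Ising interaction `∑_{{i,j}∈E} x_i x_j` (each edge counted once). -/
def isingEnergy {p : ℕ} (G : SimpleGraph (Fin p)) (x : Fin p → Bool) : ℝ :=
  (1 / 2) * ∑ i : Fin p, ∑ j : Fin p,
    if G.Adj i j then confVal (x i) * confVal (x j) else 0

/-- The partition function `Z_G`. -/
def isingZ {p : ℕ} (lam : ℝ) (G : SimpleGraph (Fin p)) : ℝ :=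
  ∑ x : Fin p → Bool, Real.exp (lam * isingEnergy G x)

/-- The ferromagnetic Ising distribution `P_G(x)`. -/
def isingP {p : ℕ} (lam : ℝ) (G : SimpleGraph (Fin p)) (x : Fin p → Bool) : ℝ :=
  Real.exp (lam * isingEnergy G x) / isingZ lam G

/-- Kullback–Leibler divergence `D(P_G ‖ P_{G'})`. -/
def isingKL {p : ℕ} (lam : ℝ) (G G' : SimpleGraph (Fin p)) : ℝ :=
  ∑ x : Fin p → Bool, isingP lam G x * Real.log (isingP lam G x / isingP lam G' x)

/-- The correlation `E_G[X_i X_j]`. -/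
def isingCorr {p : ℕ} (lam : ℝ) (G : SimpleGraph (Fin p)) (i j : Fin p) : ℝ :=
  ∑ x : Fin p → Bool, isingP lam G x * (confVal (x i) * confVal (x j))

/-- Probability of an event under `P_G`. -/
def eventProb {p : ℕ} (lam : ℝ) (G : SimpleGraph (Fin p)) (S : Set (Fin p → Bool)) : ℝ :=
  ∑ x : Fin p → Bool, if x ∈ S then isingP lam G x else 0

/-- `P_G[X_i = X_j]`. -/
def isingProbEq {p : ℕ} (lam : ℝ) (G : SimpleGraph (Fin p)) (i j : Fin p) : ℝ :=
  eventProb lam G {x | x i = x j}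

/-- The edge set of `G` as a `Finset`. -/
def edgeFin {p : ℕ} (G : SimpleGraph (Fin p)) : Finset (Sym2 (Fin p)) :=
  (Set.toFinite G.edgeSet).toFinset

/-- The edit distance `|E Δ E'|` between two graphs. -/
def editDist {p : ℕ} (G G' : SimpleGraph (Fin p)) : ℕ :=
  ((edgeFin G \ edgeFin G') ∪ (edgeFin G' \ edgeFin G)).card

open SimpleGraph

section Frustration

variable {V W : Type*} [Fintype V] [Fintype W]

def frustration (G : SimpleGraph V) (x : V → Bool) : ℕ :=
  #{e : V × V | G.Adj e.1 e.2 ∧ x e.1 ≠ x e.2}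

lemma frustration_eq_zero {G : SimpleGraph V} {x : V → Bool}
    (h : ∀ i j, G.Adj i j → x i = x j) : frustration G x = 0 := by
  simpa [frustration, filter_eq_empty_iff] using h

lemma frustration_comp_le {H : SimpleGraph W} {G : SimpleGraph V} (f : H →g G)
    (hf : Function.Injective f) (x : V → Bool) : frustration H (x ∘ f) ≤ frustration G x :=
  card_le_card_of_injOn (Prod.map f f)
    (fun e he => by simp_all [f.map_adj]) (hf.prodMap hf).injOn

lemma frustration_sum (G : SimpleGraph V) (H : SimpleGraph W) (x : V ⊕ W → Bool) :
    frustration (G ⊕g H) x = frustration G (x ∘ Sum.inl) + frustration H (x ∘ Sum.inr) := by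
  simp only [frustration, card_filter, Fintype.sum_prod_type, Fintype.sum_sum_type]
  simp

lemma frustration_top (x : V → Bool) :
    frustration ⊤ x = 2 * #{i | x i = true} * #{i | x i = false} := by
  set T : Finset V := {i | x i = true}
  set F : Finset V := {i | x i = false}
  have h : frustration ⊤ x = #(T ×ˢ F ∪ F ×ˢ T) := by
    unfold frustration
    congr 1
    ext ⟨i, j⟩
    cases hi : x i <;> cases hj : x j <;> simp [T, F, hi, hj] <;> rintro rfl <;> simp_all
  rw [h, card_union_of_disjoint, card_product, card_product]
  · ring
  · rw [disjoint_product]; left; exact disjoint_filter.2 (by simp)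

end Frustration

section IsingModel

variable {p : ℕ} (lam : ℝ) (G : SimpleGraph (Fin p))

lemma isingEnergy_eq_sub_frustration (x : Fin p → Bool) :
    isingEnergy G x = isingEnergy G (fun _ => true) - frustration G x := by
  have hspin : ∀ i j, (if G.Adj i j then confVal (x i) * confVal (x j) else 0) =
      (if G.Adj i j then 1 else 0) - 2 * (if G.Adj i j ∧ x i ≠ x j then 1 else 0) := by
    intro i j
    by_cases hij : G.Adj i j <;> cases x i <;> cases x j <;> norm_num [hij, confVal]
  rw [isingEnergy, isingEnergy, frustration, natCast_card_filter, Fintype.sum_prod_type]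
  simp_rw [hspin, sum_sub_distrib, ← mul_sum]
  simp only [confVal, if_true, mul_one]
  ring

lemma isingZ_pos : 0 < isingZ lam G :=
  sum_pos (fun _ _ => exp_pos _) univ_nonempty

lemma eventProb_nonneg (S : Set (Fin p → Bool)) : 0 ≤ eventProb lam G S :=
  sum_nonneg fun x _ => by
    split_ifs
    exacts [div_nonneg (exp_pos _).le (isingZ_pos lam G).le, le_rfl]

lemma eventProb_compl (S : Set (Fin p → Bool)) :
    eventProb lam G Sᶜ = 1 - eventProb lam G S := by
  have htotal : ∑ x, isingP lam G x = 1 := by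
    simp only [isingP]
    exact (sum_div _ _ _).symm.trans (div_self (isingZ_pos lam G).ne')
  rw [← htotal, eventProb, eventProb, eq_sub_iff_add_eq, ← sum_add_distrib]
  refine sum_congr rfl fun x _ => ?_
  by_cases hx : x ∈ S <;> simp [hx]

lemma eventProb_le_of_injective {β : Type*} (S : Set (Fin p → Bool)) (T : Finset β)
    (g : β → ℝ) (hg : ∀ b ∈ T, 0 ≤ g b) (ρ : (Fin p → Bool) → β)
    (τ : (Fin p → Bool) → Fin p → Bool) (hinj : Function.Injective fun x => (ρ x, τ x))
    (hS : ∀ x ∈ S, ρ x ∈ T ∧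
      exp (lam * isingEnergy G x) ≤ g (ρ x) * exp (lam * isingEnergy G (τ x))) :
    eventProb lam G S ≤ ∑ b ∈ T, g b := by
  set w : (Fin p → Bool) → ℝ := fun x => exp (lam * isingEnergy G x)
  have hweight : ∑ x with x ∈ S, w x ≤ (∑ b ∈ T, g b) * isingZ lam G := calc
    ∑ x with x ∈ S, w x ≤ ∑ x with x ∈ S, g (ρ x) * w (τ x) :=
      sum_le_sum fun x hx => (hS x (mem_filter.1 hx).2).2
    _ = ∑ z ∈ image (fun x => (ρ x, τ x)) {x | x ∈ S}, g z.1 * w z.2 :=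
      (sum_image (f := fun z => g z.1 * w z.2) fun x _ y _ h => hinj h).symm
    _ ≤ ∑ z ∈ T ×ˢ univ, g z.1 * w z.2 := by
      refine sum_le_sum_of_subset_of_nonneg ?_ fun z hz _ => ?_
      · intro z hz
        obtain ⟨x, hx, rfl⟩ := mem_image.1 hz
        exact mem_product.2 ⟨(hS x (mem_filter.1 hx).2).1, mem_univ _⟩
      · exact mul_nonneg (hg _ (mem_product.1 hz).1) (exp_pos _).le
    _ = (∑ b ∈ T, g b) * isingZ lam G := by rw [sum_product, isingZ, sum_mul_sum]
  rw [eventProb, ← sum_filter]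
  simp only [isingP]
  rw [← sum_div, div_le_iff₀ (isingZ_pos lam G)]
  exact hweight

end IsingModel

lemma exp_neg_two_mul_mul_le {lam : ℝ} (hlam : 0 ≤ lam) (c c' : ℕ) :
    exp (-(lam * (2 * c * c'))) ≤
      exp (-(lam * (c + c' - 1))) ^ c + exp (-(lam * (c + c' - 1))) ^ c' := by
  wlog hcc' : c ≤ c' generalizing c c'
  · have h := this c' c (by omega)
    rwa [mul_right_comm, add_comm (c' : ℝ), add_comm (_ ^ c')] at h
  have hcc'R : (c : ℝ) ≤ c' := by exact_mod_cast hcc'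
  calc exp (-(lam * (2 * c * c'))) ≤ exp (-(lam * (c + c' - 1))) ^ c := by
        rw [← exp_nat_mul]
        refine exp_le_exp.2 ?_
        nlinarith [mul_nonneg (mul_nonneg hlam c.cast_nonneg) (by linarith : (0 : ℝ) ≤ c' - c + 1)]
    _ ≤ _ := le_add_of_nonneg_right (by positivity)

lemma four_mul_one_add_inv_sq_pow_sub_one_le {m : ℕ} {E : ℝ} (hm : 2 ≤ m)
    (hE : 2 * (m : ℝ) ^ 2 < m + E) :
    4 * ((1 + (E ^ 2)⁻¹) ^ (2 * m) - 1) ≤ 2 * (m : ℝ) ^ 2 / (m + E) := by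
  have hm' : (2 : ℝ) ≤ m := by exact_mod_cast hm
  have hE3 : 3 * (m : ℝ) ≤ E := by nlinarith
  have hEpos : 0 < E := by linarith
  have hsmall : 2 * (m * (E ^ 2)⁻¹) ≤ 1 := by
    rw [← mul_assoc, ← div_eq_mul_inv, div_le_one (by positivity)]
    nlinarith
  have hpow : (1 + (E ^ 2)⁻¹) ^ (2 * m) ≤ exp (2 * (m * (E ^ 2)⁻¹)) := calc
    (1 + (E ^ 2)⁻¹) ^ (2 * m) ≤ exp ((E ^ 2)⁻¹) ^ (2 * m) := by
      gcongr
      linarith [add_one_le_exp (E ^ 2)⁻¹]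
    _ = exp (2 * (m * (E ^ 2)⁻¹)) := by rw [← exp_nat_mul]; push_cast; ring_nf
  have hexp : exp (2 * (m * (E ^ 2)⁻¹)) - 1 ≤ 2 * (2 * (m * (E ^ 2)⁻¹)) := by
    have hnonneg : 0 ≤ 2 * (m * (E ^ 2)⁻¹) := by positivity
    have h := abs_exp_sub_one_le (by rwa [abs_of_nonneg hnonneg])
    rw [abs_of_nonneg hnonneg] at h
    exact (le_abs_self _).trans h
  have hcubic : 8 * (m + E) ≤ m * E ^ 2 := by
    nlinarith [mul_nonneg (by linarith : (0 : ℝ) ≤ m - 2) (sq_nonneg E),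
      mul_nonneg hEpos.le (by linarith : (0 : ℝ) ≤ E - 6)]
  calc 4 * ((1 + (E ^ 2)⁻¹) ^ (2 * m) - 1) ≤ 16 * m / E ^ 2 := by
        rw [div_eq_mul_inv]; linarith
    _ ≤ 2 * (m : ℝ) ^ 2 / (m + E) := by
        rw [div_le_div_iff₀ (by positivity) (by positivity)]
        nlinarith [mul_le_mul_of_nonneg_left hcubic (by positivity : (0 : ℝ) ≤ 2 * m)]

section Patterns

variable {V : Type*} [Fintype V]

lemma exp_neg_mul_frustration_top_le {lam : ℝ} (hlam : 0 ≤ lam) (u : V → Bool) :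
    exp (-(lam * frustration ⊤ u)) ≤
      ∑ b, exp (-(lam * (Fintype.card V - 1))) ^ #{k | u k = b} := by
  have hcard : #{k | u k = true} + #{k | u k = false} = Fintype.card V := by
    simpa using card_filter_add_card_filter_not (s := univ) (fun k => u k = true)
  rw [frustration_top, Fintype.sum_bool, ← hcard]
  push_cast
  exact exp_neg_two_mul_mul_le hlam _ _

lemma sum_pow_card_filter_eq (q : ℝ) (b : Bool) :
    ∑ u : V → Bool, q ^ #{k | u k = b} = (1 + q) ^ Fintype.card V := by
  have hprod : ∀ u : V → Bool, q ^ #{k | u k = b} = ∏ k, if u k = b then q else 1 := by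
    intro u
    rw [prod_ite, prod_const, prod_const_one, mul_one]
  have hsum : ∑ c : Bool, (if c = b then q else 1) = 1 + q := by
    cases b <;> simp [add_comm]
  rw [sum_congr rfl fun u _ => hprod u,
    ← Fintype.prod_sum fun (_ : V) (c : Bool) => if c = b then q else 1]
  simp only [hsum, prod_const, card_univ]

lemma sum_exp_neg_frustration_nonconstant_pairs_le {lam : ℝ} (hlam : 0 ≤ lam) :
    ∑ uv ∈ ({uv | ¬((∀ k k', uv.1 k = uv.1 k') ∧ ∀ k k', uv.2 k = uv.2 k')} :
        Finset ((V → Bool) × (V → Bool))),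
      exp (-(lam * (frustration ⊤ uv.1 + frustration ⊤ uv.2))) ≤
    4 * ((1 + exp (-(lam * (Fintype.card V - 1)))) ^ (2 * Fintype.card V) - 1) := by
  set q := exp (-(lam * (Fintype.card V - 1)))
  set bad : Finset ((V → Bool) × (V → Bool)) :=
    {uv | ¬((∀ k k', uv.1 k = uv.1 k') ∧ ∀ k k', uv.2 k = uv.2 k')}
  set f : Bool → Bool → (V → Bool) × (V → Bool) → ℝ :=
    fun b b' uv => q ^ #{k | uv.1 k = b} * q ^ #{k | uv.2 k = b'}
  have hterm : ∀ uv : (V → Bool) × (V → Bool),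
      exp (-(lam * (frustration ⊤ uv.1 + frustration ⊤ uv.2))) ≤ ∑ b, ∑ b', f b b' uv := by
    intro uv
    simp only [f]
    rw [mul_add, neg_add, exp_add, ← sum_mul_sum]
    exact mul_le_mul (exp_neg_mul_frustration_top_le hlam _) (exp_neg_mul_frustration_top_le hlam _)
      (exp_pos _).le (sum_nonneg fun _ _ => by positivity)
  have hblock : ∀ b b', ∑ uv ∈ bad, f b b' uv ≤ (1 + q) ^ (2 * Fintype.card V) - 1 := by
    intro b b'
    set z : (V → Bool) × (V → Bool) := (fun _ => !b, fun _ => !b')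
    have hbad : bad ⊆ univ.erase z := fun uv huv => by
      refine mem_erase.2 ⟨?_, mem_univ _⟩
      rintro rfl
      simp [bad, z] at huv
    have htotal : ∑ uv, f b b' uv = (1 + q) ^ (2 * Fintype.card V) := by
      rw [Fintype.sum_prod_type]
      simp only [f]
      rw [← sum_mul_sum, sum_pow_card_filter_eq, sum_pow_card_filter_eq,
        two_mul, pow_add]
    have hz : f b b' z = 1 := by simp [f, z]
    calc ∑ uv ∈ bad, f b b' uv ≤ ∑ uv ∈ univ.erase z, f b b' uv :=
          sum_le_sum_of_subset_of_nonneg hbad fun _ _ _ => by positivity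
      _ = (1 + q) ^ (2 * Fintype.card V) - 1 := by
          rw [sum_erase_eq_sub (mem_univ _), htotal, hz]
  calc ∑ uv ∈ bad, exp (-(lam * (frustration ⊤ uv.1 + frustration ⊤ uv.2)))
      ≤ ∑ uv ∈ bad, ∑ b, ∑ b', f b b' uv := sum_le_sum fun uv _ => hterm uv
    _ = ∑ b, ∑ b', ∑ uv ∈ bad, f b b' uv := by
        rw [sum_comm]; exact sum_congr rfl fun _ _ => sum_comm
    _ ≤ ∑ _b : Bool, ∑ _b' : Bool, ((1 + q) ^ (2 * Fintype.card V) - 1) :=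
        sum_le_sum fun b _ => sum_le_sum fun b' _ => hblock b b'
    _ = 4 * ((1 + q) ^ (2 * Fintype.card V) - 1) := by
        simp only [sum_const, card_univ, Fintype.card_bool, nsmul_eq_mul]; ring

end Patterns

section BuildingBlock

variable {p m : ℕ} {a b : Fin m → Fin p} {G : SimpleGraph (Fin p)}

lemma frustration_cliques_le (ha : Function.Injective a) (hb : Function.Injective b)
    (hab : ∀ k k', a k ≠ b k')
    (hclique : ∀ k k', k ≠ k' → G.Adj (a k) (a k') ∧ G.Adj (b k) (b k')) (x : Fin p → Bool) :
    frustration ⊤ (x ∘ a) + frustration ⊤ (x ∘ b) ≤ frustration G x := by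
  let f : (⊤ ⊕g ⊤ : SimpleGraph (Fin m ⊕ Fin m)) →g G :=
    ⟨Sum.elim a b, by
      rintro (k | k) (k' | k') h
      exacts [(hclique k k' h).1, (not_adj_sum_inl_inr _ _ h).elim,
        (not_adj_sum_inl_inr _ _ h.symm).elim, (hclique k k' h).2]⟩
  simpa [frustration_sum, f, Function.comp_assoc] using frustration_comp_le f (ha.sumElim hb hab) x

lemma eventProb_not_constant_on_cliques_le {lam : ℝ} (hlam : 0 ≤ lam)
    (ha : Function.Injective a) (hb : Function.Injective b) (hab : ∀ k k', a k ≠ b k')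
    (hclique : ∀ k k', k ≠ k' → G.Adj (a k) (a k') ∧ G.Adj (b k) (b k'))
    (hsupp : ∀ i j, G.Adj i j → i ∈ Set.range a ∪ Set.range b) :
    eventProb lam G {x | ¬((∀ k k', x (a k) = x (a k')) ∧ ∀ k k', x (b k) = x (b k'))} ≤
      4 * ((1 + exp (-(lam * (m - 1)))) ^ (2 * m) - 1) := by
  set fill : (Fin p → Bool) → Fin p → Bool :=
    fun x => (Set.range a ∪ Set.range b).piecewise (fun _ => true) x
  have hfill : ∀ x, frustration G (fill x) = 0 := fun x =>
    frustration_eq_zero fun i j hij => by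
      simp only [fill, Set.piecewise_eq_of_mem _ _ _ (hsupp i j hij),
        Set.piecewise_eq_of_mem _ _ _ (hsupp j i hij.symm)]
  have hinj : Function.Injective fun x => ((x ∘ a, x ∘ b), fill x) := by
    intro x y hxy
    simp only [Prod.mk.injEq] at hxy
    obtain ⟨⟨hxa, hxb⟩, hfxy⟩ := hxy
    funext i
    by_cases hi : i ∈ Set.range a ∪ Set.range b
    · obtain ⟨k, rfl⟩ | ⟨k, rfl⟩ := hi
      exacts [congrFun hxa k, congrFun hxb k]
    · simpa [fill, Set.piecewise_eq_of_notMem _ _ _ hi] using congrFun hfxy i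
  have hpatterns := sum_exp_neg_frustration_nonconstant_pairs_le (V := Fin m) hlam
  rw [Fintype.card_fin] at hpatterns
  refine (eventProb_le_of_injective lam G _ _ _ (fun _ _ => (exp_pos _).le) _ _ hinj
    fun x hx => ?_).trans hpatterns
  refine ⟨by simpa using hx, ?_⟩
  rw [← exp_add, exp_le_exp, isingEnergy_eq_sub_frustration G x,
    isingEnergy_eq_sub_frustration G (fill x), hfill]
  have hle : (frustration ⊤ (x ∘ a) + frustration ⊤ (x ∘ b) : ℝ) ≤ frustration G x := by
    exact_mod_cast frustration_cliques_le ha hb hab hclique x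
  push_cast
  nlinarith

end BuildingBlock

theorem building_block_same_within_cliques_general {p m : ℕ} (lam : ℝ) (hlam : 0 < lam)
    (hm : 2 ≤ m)
    (a b : Fin m → Fin p)
    (ha : Function.Injective a) (hb : Function.Injective b)
    (hab : ∀ k k', a k ≠ b k')
    (G : SimpleGraph (Fin p))
    (hG : ∀ u w, G.Adj u w ↔
      (u ≠ w ∧ ((∃ k k', u = a k ∧ w = a k') ∨ (∃ k k', u = b k ∧ w = b k'))) ∨
      (∃ k, (u = a k ∧ w = b k) ∨ (u = b k ∧ w = a k))) :
    eventProb lam G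
        {x | (∀ k k', x (a k) = x (a k')) ∧ (∀ k k', x (b k) = x (b k'))} ≥
      1 - 2 * (m : ℝ) ^ 2 / ((m : ℝ) + Real.exp (lam * ((m : ℝ) - 1) / 2)) := by
  have hclique : ∀ k k', k ≠ k' → G.Adj (a k) (a k') ∧ G.Adj (b k) (b k') := fun k k' hkk' =>
    ⟨(hG _ _).2 (Or.inl ⟨ha.ne hkk', Or.inl ⟨k, k', rfl, rfl⟩⟩),
      (hG _ _).2 (Or.inl ⟨hb.ne hkk', Or.inr ⟨k, k', rfl, rfl⟩⟩)⟩
  have hsupp : ∀ i j, G.Adj i j → i ∈ Set.range a ∪ Set.range b := fun i j hij => by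
    rcases (hG i j).1 hij with ⟨-, ⟨k, -, rfl, -⟩ | ⟨k, -, rfl, -⟩⟩ | ⟨k, ⟨rfl, -⟩ | ⟨rfl, -⟩⟩
    exacts [Or.inl ⟨k, rfl⟩, Or.inr ⟨k, rfl⟩, Or.inl ⟨k, rfl⟩, Or.inr ⟨k, rfl⟩]
  set E := exp (lam * ((m : ℝ) - 1) / 2)
  rcases le_or_gt ((m : ℝ) + E) (2 * (m : ℝ) ^ 2) with hsmall | hlarge
  · have h := (one_le_div (by positivity)).2 hsmall
    linarith [eventProb_nonneg lam G
      {x | (∀ k k', x (a k) = x (a k')) ∧ (∀ k k', x (b k) = x (b k'))}]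
  have hq : exp (-(lam * ((m : ℝ) - 1))) = (E ^ 2)⁻¹ := by
    rw [← exp_nat_mul, ← exp_neg]
    ring_nf
  have hbad := eventProb_not_constant_on_cliques_le hlam.le ha hb hab hclique hsupp
  rw [hq, ← Set.compl_ofPred, eventProb_compl] at hbad
  linarith [four_mul_one_add_inv_sq_pow_sub_one_le hm hlarge]

/-- For the building block of Ensemble 3, with high probability
all nodes within each clique take a common value. -/
theorem building_block_same_within_cliques {p m : ℕ} (lam : ℝ) (hlam : 0 < lam)
    (hm : 2 ≤ m) (hp : 2 * m ≤ p)
    (a b : Fin m → Fin p)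
    (ha : Function.Injective a) (hb : Function.Injective b)
    (hab : ∀ k k', a k ≠ b k')
    (G : SimpleGraph (Fin p))
    (hG : ∀ u w, G.Adj u w ↔
      (u ≠ w ∧ ((∃ k k', u = a k ∧ w = a k') ∨ (∃ k k', u = b k ∧ w = b k'))) ∨
      (∃ k, (u = a k ∧ w = b k) ∨ (u = b k ∧ w = a k))) :
    eventProb lam G
        {x | (∀ k k', x (a k) = x (a k')) ∧ (∀ k k', x (b k) = x (b k'))} ≥
      1 - 2 * (m : ℝ) ^ 2 / ((m : ℝ) + Real.exp (lam * ((m : ℝ) - 1) / 2)) :=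
  building_block_same_within_cliques_general lam hlam hm a b ha hb hab G hG

end
end

section
/- Let m ≥ 2, let A and B be disjoint sets of m vertices each in {1,…,p} (p ≥ 2m), and let G be the building-block graph whose edges are: all pairs within A, all pairs within B, and a fixed perfect matching of m edges between A and B, with no other edges. Then for every pair of distinct vertices i, j ∈ A ∪ B (including pairs with i ∈ A and j ∈ B not joined by an edge), E_G[X_i X_j] ≥ 1 − 4m² / (m + e^{λ(m−1)/2}) − 2 / (1 + e^{2mλ}). -/
open Real Finset
open scoped Classical

noncomputable section

/-!
On the block, the Ising measure is the model on two `m`-cliques joined by a perfect matching; the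
spins outside the block are free and factor out. Two block spins can only disagree if one of the
cliques is not constant, or if both are constant with opposite signs.

Bounding the matching term by `m`, a block configuration weighs at most `e^{λm²}` times the clique
weights `e^{λ(S² - m²)/2}` of its two halves (`S` the spin sum), and a clique configuration with
`A` spins up and `B` down has weight `e^{-2λAB} ≤ u^A + u^B`, `u = e^{-λ(m-1)}`. Summing, some
clique is non-constant with probability at most `4P(P-1)`, `P = (1+u)^m`, and
`8P(P-1) ≤ 4m²/(m + e^{λ(m-1)/2})` as soon as `e^{λ(m-1)/2} ≥ 2m² - m`; otherwise the claimed
bound is below `-1`. The anti-aligned configurations pay `2m` of matching energy against the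
aligned ones, hence have probability at most `1/(1 + e^{2mλ})`.
-/

theorem confVal_mul_self (u : Bool) : confVal u * confVal u = 1 := by
  cases u <;> simp [confVal]

theorem sum_mul_confVal_mul_confVal {α : Type*} [Fintype α] (w : α → ℝ) (f g : α → Bool) :
    ∑ x, w x * (confVal (f x) * confVal (g x)) =
      ∑ x, w x - 2 * ∑ x with f x ≠ g x, w x := by
  have h (u v : Bool) : confVal u * confVal v = 1 - 2 * if u ≠ v then 1 else 0 := by
    cases u <;> cases v <;> norm_num [confVal]
  simp only [h, mul_sub, mul_one, Finset.sum_sub_distrib, Finset.sum_filter, Finset.mul_sum,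
    mul_ite, mul_zero, mul_comm (w _) 2]

theorem sum_comp_of_injective {α ι β M : Type*} [Fintype α] [DecidableEq α] [Fintype ι]
    [DecidableEq ι] [Fintype β] [AddCommMonoid M] {c : ι → α} (hc : Function.Injective c)
    (f : (ι → β) → M) :
    ∑ x : α → β, f (x ∘ c) =
      Fintype.card ({v // v ∉ Set.range c} → β) • ∑ y : ι → β, f y := by
  let e := (Equiv.piEquivPiSubtypeProd (· ∈ Set.range c) fun _ => β).trans
    ((Equiv.arrowCongr (Equiv.ofInjective c hc).symm (Equiv.refl β)).prodCongr (Equiv.refl _))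
  calc ∑ x : α → β, f (x ∘ c) = ∑ x, f (e x).1 := rfl
    _ = _ := by
      rw [e.sum_comp (fun q => f q.1), Fintype.sum_prod_type_right]
      simp only [Finset.sum_const, Finset.card_univ]

theorem sum_sum_ite_adj_comp {α ι M : Type*} [Fintype α] [Fintype ι] [AddCommMonoid M]
    (G : SimpleGraph α) {c : ι → α} (hc : Function.Injective c)
    (hG : ∀ u w, G.Adj u w → u ∈ Set.range c) (f : α → α → M) :
    ∑ u, ∑ w, (if G.Adj u w then f u w else 0) =
      ∑ z, ∑ z', if G.Adj (c z) (c z') then f (c z) (c z') else 0 := by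
  have hzero : ∀ u ∉ Set.range c, ∀ w, (if G.Adj u w then f u w else 0) = 0 :=
    fun u hu w => if_neg fun h => hu (hG u w h)
  rw [← Fintype.sum_of_injective c hc _ _
    (fun u hu => Finset.sum_eq_zero fun w _ => hzero u hu w) (fun _ => rfl)]
  refine Finset.sum_congr rfl fun z _ => (Fintype.sum_of_injective c hc _ _ ?_ fun _ => rfl).symm
  exact fun w hw => if_neg fun h => hw (hG w _ h.symm)

theorem sum_le_sum_add_sum_of_subset_union {α : Type*} [DecidableEq α] {s t u : Finset α}
    {f : α → ℝ} (hf : ∀ x, 0 ≤ f x) (h : s ⊆ t ∪ u) :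
    ∑ x ∈ s, f x ≤ ∑ x ∈ t, f x + ∑ x ∈ u, f x := by
  rw [← Finset.sum_union_inter]
  exact (Finset.sum_le_sum_of_subset_of_nonneg h fun x _ _ => hf x).trans
    (le_add_of_nonneg_right (Finset.sum_nonneg fun x _ => hf x))

theorem sum_pow_card_filter_eq_s16 {ι : Type*} [Fintype ι] [DecidableEq ι] (u : ℝ) (c : Bool) :
    ∑ σ : ι → Bool, u ^ #{k | σ k = c} = (1 + u) ^ Fintype.card ι := by
  have h (σ : ι → Bool) : u ^ #{k | σ k = c} = ∏ k, if σ k = c then u else 1 := by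
    rw [Finset.prod_ite, Finset.prod_const, Finset.prod_const_one, mul_one]
  have hc : ∑ b : Bool, (if b = c then u else 1) = 1 + u := by
    cases c <;> simp [add_comm]
  rw [Finset.sum_congr rfl fun σ _ => h σ,
    ← Fintype.prod_sum (κ := fun _ => Bool) fun _ b => if b = c then u else 1]
  simp only [hc, Finset.prod_const, Finset.card_univ]

theorem sum_isingP_mul_comp {p : ℕ} {ι : Type*} [Fintype ι] [DecidableEq ι] (lam : ℝ)
    (G : SimpleGraph (Fin p)) {c : ι → Fin p} (hc : Function.Injective c) {H : (ι → Bool) → ℝ}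
    (hH : ∀ x, isingEnergy G x = H (x ∘ c)) (φ : (ι → Bool) → ℝ) :
    ∑ x, isingP lam G x * φ (x ∘ c) =
      (∑ y, exp (lam * H y) * φ y) / ∑ y, exp (lam * H y) := by
  have hnum := sum_comp_of_injective (β := Bool) hc fun y => exp (lam * H y) * φ y
  have hden := sum_comp_of_injective (β := Bool) hc fun y => exp (lam * H y)
  simp only [isingP, isingZ, hH, div_mul_eq_mul_div, ← Finset.sum_div]
  rw [hnum, hden, nsmul_eq_mul, nsmul_eq_mul, mul_div_mul_left _ _ (by positivity)]

section Spin

variable {ι : Type*} [Fintype ι]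

def spinSum (σ : ι → Bool) : ℝ := ∑ k, confVal (σ k)

def spinOverlap (σ τ : ι → Bool) : ℝ := ∑ k, confVal (σ k) * confVal (τ k)

theorem sum_sum_ite_ne_confVal [DecidableEq ι] (σ : ι → Bool) :
    ∑ k, ∑ k', (if k ≠ k' then confVal (σ k) * confVal (σ k') else 0) =
      spinSum σ ^ 2 - Fintype.card ι := by
  have hdiag (k : ι) : ∑ k', (if k ≠ k' then confVal (σ k) * confVal (σ k') else 0) =
      ∑ k', confVal (σ k) * confVal (σ k') - 1 := by
    rw [← confVal_mul_self (σ k), ← Finset.sum_erase_eq_sub (Finset.mem_univ k),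
      Finset.sum_ite, Finset.sum_const_zero, add_zero, Finset.filter_ne]
  simp only [hdiag, Finset.sum_sub_distrib, Finset.sum_const, Finset.card_univ, nsmul_eq_mul,
    mul_one, spinSum, sq, Finset.sum_mul_sum]

theorem spinOverlap_le_card (σ τ : ι → Bool) : spinOverlap σ τ ≤ Fintype.card ι := by
  have h (k : ι) : confVal (σ k) * confVal (τ k) ≤ 1 := by
    cases σ k <;> cases τ k <;> norm_num [confVal]
  simpa [spinOverlap] using Finset.sum_le_sum fun k (_ : k ∈ Finset.univ) => h k

theorem spinSum_eq_sub (σ : ι → Bool) :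
    spinSum σ = #{k | σ k = true} - #{k | σ k = false} := by
  simp [spinSum, confVal, Finset.sum_ite, sub_eq_add_neg]

theorem spinSum_sq_sub_card_sq (σ : ι → Bool) :
    spinSum σ ^ 2 - Fintype.card ι ^ 2 = -4 * #{k | σ k = true} * #{k | σ k = false} := by
  have h := Finset.card_filter_add_card_filter_not (s := Finset.univ) (fun k => σ k = true)
  simp only [Finset.card_univ, Bool.not_eq_true] at h
  rw [spinSum_eq_sub, ← h]
  push_cast
  ring

end Spin

section CliqueWeight

variable {ι : Type*} [Fintype ι] {lam : ℝ}

def cliqueWeight (lam : ℝ) (σ : ι → Bool) : ℝ :=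
  exp (lam * (spinSum σ ^ 2 - Fintype.card ι ^ 2) / 2)

def constConfigs (ι : Type*) [Fintype ι] [DecidableEq ι] : Finset (ι → Bool) :=
  Finset.univ.image (Function.const ι)

/-- With `A` spins up and `B` down the exponent is `-2λAB`, and `2AB ≥ (A + B - 1) min A B`. -/
theorem cliqueWeight_le (hlam : 0 ≤ lam) (σ : ι → Bool) :
    cliqueWeight lam σ ≤ exp (-(lam * (Fintype.card ι - 1))) ^ #{k | σ k = true} +
      exp (-(lam * (Fintype.card ι - 1))) ^ #{k | σ k = false} := by
  have hcard := Finset.card_filter_add_card_filter_not (s := Finset.univ) (fun k => σ k = true)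
  simp only [Finset.card_univ, Bool.not_eq_true] at hcard
  have hsq := spinSum_sq_sub_card_sq σ
  rw [cliqueWeight, ← hcard, ← exp_nat_mul, ← exp_nat_mul]
  rw [← hcard] at hsq
  set A : ℝ := ((#{k | σ k = true} : ℕ) : ℝ)
  set B : ℝ := ((#{k | σ k = false} : ℕ) : ℝ)
  push_cast at hsq ⊢
  have hA : 0 ≤ A := by positivity
  have hB : 0 ≤ B := by positivity
  rcases le_total A B with hAB | hBA
  · refine le_add_of_le_of_nonneg (exp_le_exp.mpr ?_) (exp_pos _).le
    rw [hsq]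
    nlinarith [mul_nonneg (mul_nonneg hlam hA) (by linarith : 0 ≤ B - A + 1)]
  · refine le_add_of_nonneg_of_le (exp_pos _).le (exp_le_exp.mpr ?_)
    rw [hsq]
    nlinarith [mul_nonneg (mul_nonneg hlam hB) (by linarith : 0 ≤ A - B + 1)]

variable [DecidableEq ι]

theorem sum_cliqueWeight_le (hlam : 0 ≤ lam) :
    ∑ σ : ι → Bool, cliqueWeight lam σ ≤
      2 * (1 + exp (-(lam * (Fintype.card ι - 1)))) ^ Fintype.card ι := by
  refine (Finset.sum_le_sum fun σ _ => cliqueWeight_le hlam σ).trans_eq ?_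
  rw [Finset.sum_add_distrib, sum_pow_card_filter_eq_s16, sum_pow_card_filter_eq_s16, two_mul]

theorem sum_compl_constConfigs_cliqueWeight_le (hlam : 0 ≤ lam) :
    ∑ σ ∈ (constConfigs ι)ᶜ, cliqueWeight lam σ ≤
      2 * ((1 + exp (-(lam * (Fintype.card ι - 1)))) ^ Fintype.card ι - 1) := by
  set u := exp (-(lam * (Fintype.card ι - 1)))
  have hsub (c : Bool) : (constConfigs ι)ᶜ ⊆ Finset.univ.erase (Function.const ι c) :=
    fun σ hσ => Finset.mem_erase.mpr ⟨fun h => Finset.mem_compl.mp hσ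
      (h ▸ Finset.mem_image_of_mem _ (Finset.mem_univ c)), Finset.mem_univ σ⟩
  have hpos (c : Bool) (σ : ι → Bool) : 0 ≤ u ^ #{k | σ k = c} := by positivity
  calc ∑ σ ∈ (constConfigs ι)ᶜ, cliqueWeight lam σ
      ≤ ∑ σ ∈ (constConfigs ι)ᶜ, u ^ #{k | σ k = true} +
          ∑ σ ∈ (constConfigs ι)ᶜ, u ^ #{k | σ k = false} := by
        rw [← Finset.sum_add_distrib]
        exact Finset.sum_le_sum fun σ _ => cliqueWeight_le hlam σ
    _ ≤ ∑ σ ∈ Finset.univ.erase (Function.const ι false), u ^ #{k | σ k = true} +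
          ∑ σ ∈ Finset.univ.erase (Function.const ι true), u ^ #{k | σ k = false} :=
        add_le_add
          (Finset.sum_le_sum_of_subset_of_nonneg (hsub false) fun σ _ _ => hpos true σ)
          (Finset.sum_le_sum_of_subset_of_nonneg (hsub true) fun σ _ _ => hpos false σ)
    _ = 2 * ((1 + u) ^ Fintype.card ι - 1) := by
        rw [Finset.sum_erase_eq_sub (Finset.mem_univ _), Finset.sum_erase_eq_sub
          (Finset.mem_univ _), sum_pow_card_filter_eq_s16, sum_pow_card_filter_eq_s16]
        simp only [Function.const_apply, Bool.false_eq_true, Bool.true_eq_false,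
          Finset.filter_false, Finset.card_empty, pow_zero]
        ring

end CliqueWeight

/-- Each clique contributes `(S² - m) / 2`, the matching contributes the overlap. -/
def blockEnergy {m : ℕ} (σ τ : Fin m → Bool) : ℝ :=
  (spinSum σ ^ 2 + spinSum τ ^ 2) / 2 - m + spinOverlap σ τ

def IsBuildingBlock {p m : ℕ} (G : SimpleGraph (Fin p)) (a b : Fin m → Fin p) : Prop :=
  ∀ u w, G.Adj u w ↔
    (u ≠ w ∧ ((∃ k k', u = a k ∧ w = a k') ∨ (∃ k k', u = b k ∧ w = b k'))) ∨
    (∃ k, (u = a k ∧ w = b k) ∨ (u = b k ∧ w = a k))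

namespace IsBuildingBlock

variable {p m : ℕ} {a b : Fin m → Fin p} {G : SimpleGraph (Fin p)}

theorem mem_range_of_adj (hG : IsBuildingBlock G a b) {u w : Fin p} (h : G.Adj u w) :
    u ∈ Set.range (Sum.elim a b) := by
  rw [hG] at h
  rcases h with ⟨-, ⟨k, -, rfl, -⟩ | ⟨k, -, rfl, -⟩⟩ | ⟨k, ⟨rfl, -⟩ | ⟨rfl, -⟩⟩
  exacts [⟨.inl k, rfl⟩, ⟨.inr k, rfl⟩, ⟨.inl k, rfl⟩, ⟨.inr k, rfl⟩]

theorem adj_left_left (ha : Function.Injective a) (hab : ∀ k k', a k ≠ b k')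
    (hG : IsBuildingBlock G a b) (k k' : Fin m) : G.Adj (a k) (a k') ↔ k ≠ k' := by
  simp [hG (a k), ha.eq_iff, hab]

theorem adj_right_right (hb : Function.Injective b) (hab : ∀ k k', a k ≠ b k')
    (hG : IsBuildingBlock G a b) (k k' : Fin m) : G.Adj (b k) (b k') ↔ k ≠ k' := by
  have hba : ∀ k k', b k ≠ a k' := fun k k' => (hab k' k).symm
  simp [hG (b k), hb.eq_iff, hba]

theorem adj_left_right (ha : Function.Injective a) (hb : Function.Injective b)
    (hab : ∀ k k', a k ≠ b k') (hG : IsBuildingBlock G a b) (k k' : Fin m) :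
    G.Adj (a k) (b k') ↔ k = k' := by
  have hba : ∀ k k', b k ≠ a k' := fun k k' => (hab k' k).symm
  simp [hG (a k), ha.eq_iff, hb.eq_iff, hab, hba, eq_comm]

theorem isingEnergy_eq (ha : Function.Injective a) (hb : Function.Injective b)
    (hab : ∀ k k', a k ≠ b k') (hG : IsBuildingBlock G a b) (x : Fin p → Bool) :
    isingEnergy G x = blockEnergy (x ∘ a) (x ∘ b) := by
  rw [isingEnergy, sum_sum_ite_adj_comp G (ha.sumElim hb hab) fun u w => hG.mem_range_of_adj]
  simp only [Fintype.sum_sum_type, Sum.elim_inl, Sum.elim_inr, adj_left_left ha hab hG,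
    adj_right_right hb hab hG, adj_left_right ha hb hab hG, G.adj_comm (b _) (a _)]
  have hA := sum_sum_ite_ne_confVal (x ∘ a)
  have hB := sum_sum_ite_ne_confVal (x ∘ b)
  simp only [Function.comp_apply, Fintype.card_fin] at hA hB
  simp only [Finset.sum_add_distrib, Finset.sum_ite_eq, Finset.sum_ite_eq', Finset.mem_univ,
    if_true, hA, hB, blockEnergy, spinOverlap, Function.comp_apply]
  simp only [mul_comm (confVal (x (b _))) (confVal (x (a _)))]
  ring

end IsBuildingBlock

section BlockWeight

variable {m : ℕ} {lam : ℝ}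

def blockWeight (lam : ℝ) (q : (Fin m → Bool) × (Fin m → Bool)) : ℝ :=
  exp (lam * blockEnergy q.1 q.2)

def antiAlignedConfigs (m : ℕ) : Finset ((Fin m → Bool) × (Fin m → Bool)) :=
  Finset.univ.image fun c => (Function.const (Fin m) c, Function.const (Fin m) !c)

theorem blockEnergy_const_const (c c' : Bool) :
    blockEnergy (Function.const (Fin m) c) (Function.const (Fin m) c') =
      m ^ 2 - m + m * (confVal c * confVal c') := by
  simp only [blockEnergy, spinSum, spinOverlap, Function.const_apply, Finset.sum_const,
    Finset.card_univ, Fintype.card_fin, nsmul_eq_mul, mul_pow]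
  cases c <;> norm_num [confVal]

theorem blockWeight_le (hlam : 0 ≤ lam) (q : (Fin m → Bool) × (Fin m → Bool)) :
    blockWeight lam q ≤ exp (lam * m ^ 2) * (cliqueWeight lam q.1 * cliqueWeight lam q.2) := by
  have h := spinOverlap_le_card q.1 q.2
  rw [Fintype.card_fin] at h
  rw [blockWeight, cliqueWeight, cliqueWeight, ← exp_add, ← exp_add, exp_le_exp,
    Fintype.card_fin, blockEnergy]
  nlinarith

theorem sum_product_blockWeight_le (hlam : 0 ≤ lam) (s t : Finset (Fin m → Bool)) :
    ∑ q ∈ s ×ˢ t, blockWeight lam q ≤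
      exp (lam * m ^ 2) * ((∑ σ ∈ s, cliqueWeight lam σ) * ∑ τ ∈ t, cliqueWeight lam τ) := by
  rw [Finset.sum_mul_sum, Finset.mul_sum, Finset.sum_product]
  refine Finset.sum_le_sum fun σ _ => ?_
  rw [Finset.mul_sum]
  exact Finset.sum_le_sum fun τ _ => blockWeight_le hlam (σ, τ)

theorem two_mul_exp_add_le_sum_blockWeight (hm : 0 < m) :
    2 * exp (lam * m ^ 2) + 2 * exp (lam * (m ^ 2 - 2 * m)) ≤
      ∑ q, blockWeight (m := m) lam q := by
  have : Nonempty (Fin m) := ⟨⟨0, hm⟩⟩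
  have hinj : Function.Injective fun cc : Bool × Bool =>
      (Function.const (Fin m) cc.1, Function.const (Fin m) cc.2) :=
    fun cc cc' h => Prod.ext (Function.const_injective congr($h.1))
      (Function.const_injective congr($h.2))
  calc 2 * exp (lam * m ^ 2) + 2 * exp (lam * (m ^ 2 - 2 * m))
      = ∑ cc : Bool × Bool, blockWeight lam (Function.const (Fin m) cc.1,
          Function.const (Fin m) cc.2) := by
        simp only [Fintype.sum_prod_type, Fintype.sum_bool, blockWeight,
          blockEnergy_const_const, confVal, Bool.false_eq_true, if_true, if_false]
        ring_nf
    _ = ∑ q ∈ Finset.univ.image _, blockWeight lam q := (Finset.sum_image hinj.injOn).symm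
    _ ≤ ∑ q, blockWeight lam q :=
        Finset.sum_le_univ_sum_of_nonneg fun q => (exp_pos _).le

theorem sum_antiAlignedConfigs_blockWeight_le :
    ∑ q ∈ antiAlignedConfigs m, blockWeight lam q ≤ 2 * exp (lam * (m ^ 2 - 2 * m)) := by
  refine (Finset.sum_image_le_of_nonneg fun q _ => (exp_pos _).le).trans_eq ?_
  simp only [Fintype.sum_bool, blockEnergy_const_const, confVal, Bool.not_true, Bool.not_false,
    Bool.false_eq_true, if_true, if_false]
  ring_nf

theorem filter_sumElim_ne_subset (z z' : Fin m ⊕ Fin m) :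
    ({q | Sum.elim q.1 q.2 z ≠ Sum.elim q.1 q.2 z'} :
        Finset ((Fin m → Bool) × (Fin m → Bool))) ⊆
      ((constConfigs (Fin m))ᶜ ×ˢ Finset.univ ∪ Finset.univ ×ˢ (constConfigs (Fin m))ᶜ) ∪
        antiAlignedConfigs m := by
  rintro ⟨σ, τ⟩ hq
  simp only [Finset.mem_filter, Finset.mem_univ, true_and] at hq
  by_contra! h
  simp only [Finset.mem_union, Finset.mem_product, Finset.mem_compl, Finset.mem_univ, and_true,
    true_and, not_or, not_not, constConfigs, Finset.mem_image] at h
  obtain ⟨⟨⟨c, rfl⟩, ⟨c', rfl⟩⟩, hanti⟩ := h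
  obtain rfl : c' = c := by
    by_contra hc
    exact hanti (Finset.mem_image.mpr ⟨c, Finset.mem_univ _, by simp [Bool.eq_not.mpr hc]⟩)
  exact hq (by cases z <;> cases z' <;> rfl)

theorem sum_filter_ne_blockWeight_le (hlam : 0 ≤ lam) (z z' : Fin m ⊕ Fin m) :
    ∑ q with Sum.elim q.1 q.2 z ≠ Sum.elim q.1 q.2 z', blockWeight lam q ≤
      8 * exp (lam * m ^ 2) * ((1 + exp (-(lam * (m - 1)))) ^ m *
        ((1 + exp (-(lam * (m - 1)))) ^ m - 1)) + 2 * exp (lam * (m ^ 2 - 2 * m)) := by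
  have hW (q : (Fin m → Bool) × (Fin m → Bool)) : 0 ≤ blockWeight lam q := (exp_pos _).le
  have hφ (s : Finset (Fin m → Bool)) : 0 ≤ ∑ σ ∈ s, cliqueWeight lam σ :=
    Finset.sum_nonneg fun σ _ => (exp_pos _).le
  have hall := sum_cliqueWeight_le (ι := Fin m) hlam
  have hnonconst := sum_compl_constConfigs_cliqueWeight_le (ι := Fin m) hlam
  simp only [Fintype.card_fin] at hall hnonconst
  set S := (constConfigs (Fin m))ᶜ
  calc ∑ q with Sum.elim q.1 q.2 z ≠ Sum.elim q.1 q.2 z', blockWeight lam q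
      ≤ ∑ q ∈ S ×ˢ Finset.univ ∪ Finset.univ ×ˢ S, blockWeight lam q +
          ∑ q ∈ antiAlignedConfigs m, blockWeight lam q :=
        sum_le_sum_add_sum_of_subset_union hW (filter_sumElim_ne_subset z z')
    _ ≤ ∑ q ∈ S ×ˢ Finset.univ, blockWeight lam q +
          ∑ q ∈ Finset.univ ×ˢ S, blockWeight lam q + 2 * exp (lam * (m ^ 2 - 2 * m)) :=
        add_le_add (sum_le_sum_add_sum_of_subset_union hW subset_rfl)
          sum_antiAlignedConfigs_blockWeight_le
    _ ≤ exp (lam * m ^ 2) * ((∑ σ ∈ S, cliqueWeight lam σ) * ∑ τ, cliqueWeight lam τ) +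
          exp (lam * m ^ 2) * ((∑ σ, cliqueWeight lam σ) * ∑ τ ∈ S, cliqueWeight lam τ) +
          2 * exp (lam * (m ^ 2 - 2 * m)) := by
        gcongr <;> exact sum_product_blockWeight_le hlam _ _
    _ ≤ _ := by
        have := mul_le_mul hnonconst hall (hφ _) ((hφ _).trans hnonconst)
        rw [mul_comm (∑ σ, cliqueWeight lam σ)]
        nlinarith [exp_pos (lam * m ^ 2)]

end BlockWeight

/-- `(1 + x)^m ≤ e^{mx} ≤ 1 / (1 - mx)` with `x = E⁻²` and `mx ≤ 1/18`. -/
theorem eight_mul_pow_mul_pow_sub_one_le {m : ℕ} (hm : 2 ≤ m) {E : ℝ}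
    (hE : 2 * m ^ 2 - m ≤ E) :
    8 * (1 + (E ^ 2)⁻¹) ^ m * ((1 + (E ^ 2)⁻¹) ^ m - 1) ≤ 4 * m ^ 2 / (m + E) := by
  have hm' : (2 : ℝ) ≤ m := by exact_mod_cast hm
  have hE3 : 3 * m ≤ E := by nlinarith
  have hE0 : 0 < E := by linarith
  set x := (E ^ 2)⁻¹
  set t := m * x
  set P := (1 + x) ^ m
  have hx : 0 ≤ x := by positivity
  have hEx : E * x ≤ 1 / 6 := by
    have hEEx : E * x * E = 1 := by
      rw [mul_right_comm, ← sq]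
      exact mul_inv_cancel₀ (pow_ne_zero 2 hE0.ne')
    nlinarith [mul_nonneg (by linarith : (0 : ℝ) ≤ E - 6) (mul_nonneg hE0.le hx)]
  have hxmE : x * (m + E) ≤ 2 / 9 := by nlinarith [mul_le_mul_of_nonneg_left hE3 hx]
  have ht : t ≤ 1 / 18 := by nlinarith [mul_le_mul_of_nonneg_left hE3 hx]
  have hP1 : 1 ≤ P := one_le_pow₀ (by linarith)
  have hP : P * (1 - t) ≤ 1 := by
    have hexp : P ≤ exp t := by
      rw [exp_nat_mul]
      exact pow_le_pow_left₀ (by positivity) (by linarith [add_one_le_exp x]) m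
    have := exp_bound_div_one_sub_of_interval (by positivity : 0 ≤ t) (by linarith)
    rw [le_div_iff₀ (by linarith)] at this
    nlinarith
  have hP17 : P ≤ 18 / 17 := by nlinarith
  have hP1t : P - 1 ≤ t * P := by nlinarith
  have h9 : 8 * P * (P - 1) ≤ 9 * t := by
    nlinarith [mul_le_mul_of_nonneg_left hP1t (by positivity : (0 : ℝ) ≤ 8 * P),
      mul_le_mul hP17 hP17 (by positivity) (by positivity),
      mul_nonneg hx (by positivity : (0 : ℝ) ≤ m)]
  refine h9.trans ?_
  rw [le_div_iff₀ (by linarith)]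
  nlinarith [mul_le_mul_of_nonneg_left hxmE (by positivity : (0 : ℝ) ≤ 9 * m)]

theorem two_mul_sum_filter_ne_blockWeight_div_le {m : ℕ} {lam : ℝ} (hm : 2 ≤ m)
    (hlam : 0 ≤ lam) (z z' : Fin m ⊕ Fin m) :
    2 * (∑ q with Sum.elim q.1 q.2 z ≠ Sum.elim q.1 q.2 z', blockWeight lam q) /
        ∑ q, blockWeight (m := m) lam q ≤
      4 * m ^ 2 / (m + exp (lam * (m - 1) / 2)) + 2 / (1 + exp (2 * m * lam)) := by
  have hSD := sum_filter_ne_blockWeight_le hlam z z'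
  have hZ : 2 * exp (lam * m ^ 2) + 2 * exp (lam * (m ^ 2 - 2 * m)) ≤
      ∑ q, blockWeight lam q := two_mul_exp_add_le_sum_blockWeight (by omega)
  have hXY : exp (lam * m ^ 2) = exp (lam * (m ^ 2 - 2 * m)) * exp (2 * m * lam) := by
    rw [← exp_add]
    ring_nf
  have hu : exp (-(lam * (m - 1))) = (exp (lam * (m - 1) / 2) ^ 2)⁻¹ := by
    rw [← exp_nat_mul, ← exp_neg]
    ring_nf
  rw [hu] at hSD
  set E := exp (lam * (m - 1) / 2)
  set X := exp (lam * m ^ 2)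
  set Y := exp (lam * (m ^ 2 - 2 * m))
  set Z := ∑ q, blockWeight (m := m) lam q
  set SD := ∑ q with Sum.elim q.1 q.2 z ≠ Sum.elim q.1 q.2 z', blockWeight lam q
  set R := 4 * (m : ℝ) ^ 2 / (m + E)
  have hX : 0 < X := exp_pos _
  have hY : 0 < Y := exp_pos _
  have hZpos : 0 < Z := by linarith
  have hR : 0 ≤ R := by positivity
  have hanti : 4 * Y ≤ 2 / (1 + exp (2 * m * lam)) * Z := by
    rw [div_mul_eq_mul_div, le_div_iff₀ (by positivity)]
    nlinarith
  rw [div_le_iff₀ hZpos, add_mul]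
  by_cases htriv : 2 ≤ R
  · have hSDZ : SD ≤ Z := Finset.sum_le_univ_sum_of_nonneg fun q => (exp_pos _).le
    nlinarith
  have hE : 2 * m ^ 2 - m ≤ E := by
    rw [not_le, div_lt_iff₀ (by positivity)] at htriv
    linarith
  set P := (1 + (E ^ 2)⁻¹) ^ m
  have h8 : 8 * P * (P - 1) ≤ R := eight_mul_pow_mul_pow_sub_one_le hm hE
  have hP : 0 ≤ P * (P - 1) :=
    mul_nonneg (by positivity)
      (sub_nonneg.mpr (one_le_pow₀ (le_add_of_nonneg_right (by positivity))))
  nlinarith [mul_nonneg (sub_nonneg.mpr hZ) hR, mul_nonneg (sub_nonneg.mpr h8) hX.le]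

theorem IsBuildingBlock.isingCorr_eq {p m : ℕ} {a b : Fin m → Fin p}
    {G : SimpleGraph (Fin p)} (lam : ℝ) (ha : Function.Injective a) (hb : Function.Injective b)
    (hab : ∀ k k', a k ≠ b k') (hG : IsBuildingBlock G a b) (z z' : Fin m ⊕ Fin m) :
    isingCorr lam G (Sum.elim a b z) (Sum.elim a b z') =
      (∑ q : (Fin m → Bool) × (Fin m → Bool),
          blockWeight lam q * (confVal (Sum.elim q.1 q.2 z) * confVal (Sum.elim q.1 q.2 z'))) /
        ∑ q, blockWeight (m := m) lam q := by
  have hpair (g : (Fin m ⊕ Fin m → Bool) → ℝ) :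
      ∑ y, g y = ∑ q : (Fin m → Bool) × (Fin m → Bool), g (Sum.elim q.1 q.2) :=
    (Fintype.sum_equiv (Equiv.sumArrowEquivProdArrow _ _ _).symm _ _ fun _ => rfl).symm
  refine (sum_isingP_mul_comp lam G (ha.sumElim hb hab)
    (H := fun y => blockEnergy (y ∘ Sum.inl) (y ∘ Sum.inr)) (hG.isingEnergy_eq ha hb hab)
    fun y => confVal (y z) * confVal (y z')).trans ?_
  rw [hpair, hpair]
  rfl

theorem building_block_corr_lower_general {p m : ℕ} (lam : ℝ) (hlam : 0 < lam)
    (hm : 2 ≤ m)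
    (a b : Fin m → Fin p)
    (ha : Function.Injective a) (hb : Function.Injective b)
    (hab : ∀ k k', a k ≠ b k')
    (G : SimpleGraph (Fin p))
    (hG : ∀ u w, G.Adj u w ↔
      (u ≠ w ∧ ((∃ k k', u = a k ∧ w = a k') ∨ (∃ k k', u = b k ∧ w = b k'))) ∨
      (∃ k, (u = a k ∧ w = b k) ∨ (u = b k ∧ w = a k)))
    (i j : Fin p)
    (hi : (∃ k, i = a k) ∨ (∃ k, i = b k))
    (hj : (∃ k, j = a k) ∨ (∃ k, j = b k)) :
    isingCorr lam G i j ≥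
      1 - 4 * (m : ℝ) ^ 2 / ((m : ℝ) + Real.exp (lam * ((m : ℝ) - 1) / 2)) -
        2 / (1 + Real.exp (2 * (m : ℝ) * lam)) := by
  have hblock {v : Fin p} (hv : (∃ k, v = a k) ∨ (∃ k, v = b k)) :
      ∃ z, Sum.elim a b z = v := by
    rcases hv with ⟨k, rfl⟩ | ⟨k, rfl⟩
    exacts [⟨.inl k, rfl⟩, ⟨.inr k, rfl⟩]
  obtain ⟨z, rfl⟩ := hblock hi
  obtain ⟨z', rfl⟩ := hblock hj
  have hZ : 0 < ∑ q, blockWeight (m := m) lam q :=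
    Finset.sum_pos (fun q _ => exp_pos _) Finset.univ_nonempty
  rw [IsBuildingBlock.isingCorr_eq lam ha hb hab hG, sum_mul_confVal_mul_confVal, sub_div,
    div_self hZ.ne']
  have := two_mul_sum_filter_ne_blockWeight_div_le hm hlam.le z z'
  linarith

/-- Correlation lower bound between any two distinct vertices of
the building block of Ensemble 3. -/
theorem building_block_corr_lower {p m : ℕ} (lam : ℝ) (hlam : 0 < lam)
    (hm : 2 ≤ m) (hp : 2 * m ≤ p)
    (a b : Fin m → Fin p)
    (ha : Function.Injective a) (hb : Function.Injective b)
    (hab : ∀ k k', a k ≠ b k')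
    (G : SimpleGraph (Fin p))
    (hG : ∀ u w, G.Adj u w ↔
      (u ≠ w ∧ ((∃ k k', u = a k ∧ w = a k') ∨ (∃ k k', u = b k ∧ w = b k'))) ∨
      (∃ k, (u = a k ∧ w = b k) ∨ (u = b k ∧ w = a k)))
    (i j : Fin p) (hij : i ≠ j)
    (hi : (∃ k, i = a k) ∨ (∃ k, i = b k))
    (hj : (∃ k, j = a k) ∨ (∃ k, j = b k)) :
    isingCorr lam G i j ≥
      1 - 4 * (m : ℝ) ^ 2 / ((m : ℝ) + Real.exp (lam * ((m : ℝ) - 1) / 2)) -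
        2 / (1 + Real.exp (2 * (m : ℝ) * lam)) :=
  building_block_corr_lower_general lam hlam hm a b ha hb hab G hG i j hi hj

end
end
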